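/- arXiv:1507.07146 — 3 statements merged into one kernel-verified Lean document; each statement's English description precedes it below -/
import Mathlib

section
/- Let A_0 = I ∈ R^{d×d} and A_t = A_{t-1} + x_t x_t^⊤/r with r > 0. Then ∑_{t=1}^T x_t^⊤ A_t^{-1} x_t ≤ r·log(det(A_T)). -/
/-!
Writing `A_{t-1} = A_t - r⁻¹ x_t x_tᵀ`, the matrix determinant lemma gives
`x_tᵀ A_t⁻¹ x_t = r (1 - det A_{t-1} / det A_t)`, and `1 - a/b ≤ log b - log a` bounds this by
`r (log det A_t - log det A_{t-1})`, which telescopes to `r log det A_T` since `det A_0 = 1`.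
-/

open Matrix

namespace Matrix

variable {n R : Type*} [Fintype n] [DecidableEq n]

theorem det_add_vecMulVec [CommRing R] {A : Matrix n n R} (hA : IsUnit A.det) (u v : n → R) :
    (A + vecMulVec u v).det = A.det * (1 + v ⬝ᵥ A⁻¹ *ᵥ u) := by
  rw [vecMulVec_eq Unit, det_add_replicateCol_mul_replicateRow hA, Matrix.mul_assoc,
    ← replicateCol_mulVec, det_unique (1 + _)]
  rfl

theorem dotProduct_inv_mulVec_add_smul_vecMulVec [Field R] {A : Matrix n n R} {c : R}
    (hc : c ≠ 0) (u : n → R) (hB : (A + c • vecMulVec u u).det ≠ 0) :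
    u ⬝ᵥ (A + c • vecMulVec u u)⁻¹ *ᵥ u = c⁻¹ * (1 - A.det / (A + c • vecMulVec u u).det) := by
  set B := A + c • vecMulVec u u
  have hdet : A.det = B.det * (1 - c * u ⬝ᵥ B⁻¹ *ᵥ u) := by
    have hAB : A = B + vecMulVec (-c • u) u := by simp [B]
    rw [hAB, det_add_vecMulVec (isUnit_iff_ne_zero.2 hB), mulVec_smul, dotProduct_smul]
    simp [B, sub_eq_add_neg]
  rw [hdet, mul_div_cancel_left₀ _ hB]
  field_simp
  ring

end Matrix

theorem Real.one_sub_div_le_log_sub_log {a b : ℝ} (ha : 0 < a) (hb : 0 < b) :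
    1 - a / b ≤ Real.log b - Real.log a := by
  simpa [Real.log_div hb.ne' ha.ne'] using Real.one_sub_inv_le_log_of_pos (div_pos hb ha)

/-- Telescoping determinant bound: `∑_{t=1}^T x_tᵀ A_t⁻¹ x_t ≤ r log det(A_T)`. -/
theorem sum_quad_form_inv_le_log_det {d : ℕ} (r : ℝ) (hr : 0 < r)
    (x : ℕ → Fin d → ℝ) (A : ℕ → Matrix (Fin d) (Fin d) ℝ)
    (hA0 : A 0 = 1)
    (hA : ∀ t : ℕ, A (t + 1) = A t + r⁻¹ • Matrix.vecMulVec (x (t + 1)) (x (t + 1)))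
    (T : ℕ) :
    ∑ t ∈ Finset.Icc 1 T, x t ⬝ᵥ (A t)⁻¹.mulVec (x t) ≤ r * Real.log (A T).det := by
  have hposDef : ∀ t, (A t).PosDef := by
    intro t
    induction t with
    | zero => exact hA0 ▸ PosDef.one
    | succ t ih =>
      rw [hA t]
      exact ih.add_posSemidef ((posSemidef_vecMulVec_self_star _).smul (inv_nonneg.2 hr.le))
  have hstep : ∀ t, x (t + 1) ⬝ᵥ (A (t + 1))⁻¹ *ᵥ x (t + 1)
      ≤ r * (Real.log (A (t + 1)).det - Real.log (A t).det) := by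
    intro t
    have hdet := (hposDef (t + 1)).det_pos
    rw [hA t] at hdet ⊢
    rw [dotProduct_inv_mulVec_add_smul_vecMulVec (inv_ne_zero hr.ne') _ hdet.ne', inv_inv]
    exact mul_le_mul_of_nonneg_left
      (Real.one_sub_div_le_log_sub_log (hposDef t).det_pos hdet) hr.le
  induction T with
  | zero => simp [hA0]
  | succ T ih =>
    rw [Finset.sum_Icc_succ_top (by omega)]
    linarith [hstep T]
end

section
/- (FSOL regret bound) Let (x_t, y_t), t = 1,…,T be examples with x_t ∈ R^d, y_t ∈ {−1, +1}, ‖x_t‖₁ ≤ X (and hence ‖x_t‖₂ ≤ X). Run FSOL: θ_1 = 0; w_t = soft-threshold of θ_t at level ηλ; suffer hinge loss ℓ_t(w) = max(0, 1 − y_t w^⊤ x_t); θ_{t+1} = θ_t + η L_t y_t x_t, where L_t = 1 if ℓ_t(w_t) > 0 and 0 otherwise. Then for any w ∈ R^d, ∑_{t=1}^T ℓ_t(w_t) − ∑_{t=1}^T ℓ_t(w) ≤ ‖w‖₂²/(2η) + (η/2) T X² + η λ T X. -/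
/-!
Online gradient descent on the "dual" iterate `θ_t`, with the loss evaluated at the
soft-thresholded `w_t`. The potential `‖θ_t - w‖₂²/(2η)` telescopes: in an active round the
subgradient step `θ_{t+1} = θ_t + η g` with `g = y_t x_t` gives
`⟪w - θ_t, g⟫ = (‖θ_t - w‖² - ‖θ_{t+1} - w‖²)/(2η) + (η/2)‖g‖²`, and `‖g‖₂ ≤ ‖g‖₁ ≤ X`.
Evaluating at `w_t` instead of `θ_t` costs `⟪θ_t - w_t, g⟫ ≤ ‖θ_t - w_t‖_∞ ‖g‖₁ ≤ ηλX`,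
since soft thresholding moves every coordinate by at most `ηλ`.
-/

open Finset

/-- Dot product on `ℝ^d`. -/
noncomputable def dot {d : ℕ} (u v : Fin d → ℝ) : ℝ := ∑ i, u i * v i

noncomputable def softThreshold (c t : ℝ) : ℝ := Real.sign t * max (|t| - c) 0

lemma abs_sub_softThreshold_le {c : ℝ} (hc : 0 ≤ c) (t : ℝ) : |t - softThreshold c t| ≤ c := by
  unfold softThreshold
  rcases lt_trichotomy t 0 with ht | rfl | ht
  · rw [Real.sign_of_neg ht, abs_of_neg ht, abs_le]
    constructor <;> cases max_cases (-t - c) 0 <;> linarith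
  · simpa using hc
  · rw [Real.sign_of_pos ht, abs_of_pos ht, abs_le]
    constructor <;> cases max_cases (t - c) 0 <;> linarith

section Vectors

variable {d : ℕ}

lemma dotProduct_self_le_sq_sum_abs (v : Fin d → ℝ) : v ⬝ᵥ v ≤ (∑ i, |v i|) ^ 2 :=
  calc v ⬝ᵥ v = ∑ i, |v i| ^ 2 := sum_congr rfl fun i _ => by rw [sq_abs, sq]
    _ ≤ (∑ i, |v i|) ^ 2 := sum_sq_le_sq_sum_of_nonneg fun i _ => abs_nonneg _

lemma dotProduct_le_mul_sum_abs {a : Fin d → ℝ} {c : ℝ} (ha : ∀ i, |a i| ≤ c) (b : Fin d → ℝ) :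
    a ⬝ᵥ b ≤ c * ∑ i, |b i| :=
  calc a ⬝ᵥ b ≤ ∑ i, |a i * b i| := (le_abs_self _).trans (abs_sum_le_sum_abs _ _)
    _ ≤ ∑ i, c * |b i| := sum_le_sum fun i _ => by
      rw [abs_mul]; exact mul_le_mul_of_nonneg_right (ha i) (abs_nonneg _)
    _ = c * ∑ i, |b i| := (mul_sum _ _ _).symm

lemma dotProduct_sub_smul_self (θ g u : Fin d → ℝ) (a : ℝ) :
    (θ + a • g - u) ⬝ᵥ (θ + a • g - u) =
      (θ - u) ⬝ᵥ (θ - u) + 2 * a * (g ⬝ᵥ (θ - u)) + a ^ 2 * (g ⬝ᵥ g) := by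
  rw [add_sub_right_comm, add_dotProduct, dotProduct_add, dotProduct_add, smul_dotProduct,
    smul_dotProduct, dotProduct_smul, dotProduct_smul, dotProduct_comm (θ - u) g]
  simp only [smul_eq_mul]
  ring

lemma dotProduct_sub_le_of_step {η c X : ℝ} (hη : 0 < η) (hc : 0 ≤ c)
    {θ w g : Fin d → ℝ} (hθw : ∀ i, |θ i - w i| ≤ c) (hg : ∑ i, |g i| ≤ X) (u : Fin d → ℝ) :
    (u - w) ⬝ᵥ g ≤ (θ - u) ⬝ᵥ (θ - u) / (2 * η) - (θ + η • g - u) ⬝ᵥ (θ + η • g - u) / (2 * η) +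
      (η / 2 * X ^ 2 + c * X) := by
  have hgg : g ⬝ᵥ g ≤ X ^ 2 := (dotProduct_self_le_sq_sum_abs g).trans
    (pow_le_pow_left₀ (sum_nonneg fun i _ => abs_nonneg _) hg 2)
  have hshift : (θ - w) ⬝ᵥ g ≤ c * X :=
    (dotProduct_le_mul_sum_abs hθw g).trans (mul_le_mul_of_nonneg_left hg hc)
  have hdescent : (u - θ) ⬝ᵥ g = (θ - u) ⬝ᵥ (θ - u) / (2 * η) -
      (θ + η • g - u) ⬝ᵥ (θ + η • g - u) / (2 * η) + η / 2 * (g ⬝ᵥ g) := by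
    rw [dotProduct_sub_smul_self, dotProduct_comm g, ← neg_sub θ u, neg_dotProduct]
    field_simp
    ring
  have hsplit : (u - w) ⬝ᵥ g = (u - θ) ⬝ᵥ g + (θ - w) ⬝ᵥ g := by
    rw [← add_dotProduct, sub_add_sub_cancel]
  have hgg' := mul_le_mul_of_nonneg_left hgg (by positivity : 0 ≤ η / 2)
  linarith

noncomputable def hingeLoss (y : ℝ) (x v : Fin d → ℝ) : ℝ := max 0 (1 - y * (v ⬝ᵥ x))

lemma hingeLoss_nonneg (y : ℝ) (x v : Fin d → ℝ) : 0 ≤ hingeLoss y x v := le_max_left _ _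

lemma hingeLoss_sub_le_of_pos {y : ℝ} {x w : Fin d → ℝ} (hw : 0 < hingeLoss y x w)
    (u : Fin d → ℝ) : hingeLoss y x w - hingeLoss y x u ≤ (u - w) ⬝ᵥ (y • x) := by
  have hw' : hingeLoss y x w = 1 - y * (w ⬝ᵥ x) :=
    max_eq_right ((lt_max_iff.mp hw).resolve_left (lt_irrefl 0)).le
  have hu : 1 - y * (u ⬝ᵥ x) ≤ hingeLoss y x u := le_max_right _ _
  rw [dotProduct_smul, sub_dotProduct, smul_eq_mul]
  linarith

lemma hingeLoss_sub_le_of_fsol_step {η c X y L : ℝ} (hη : 0 < η) (hc : 0 ≤ c) (hy : |y| ≤ 1)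
    {θ w x : Fin d → ℝ} (hθw : ∀ i, |θ i - w i| ≤ c) (hx : ∑ i, |x i| ≤ X)
    (hL : L = if 0 < hingeLoss y x w then 1 else 0) (u : Fin d → ℝ) :
    hingeLoss y x w - hingeLoss y x u ≤
      (θ - u) ⬝ᵥ (θ - u) / (2 * η) -
        (θ + (η * L * y) • x - u) ⬝ᵥ (θ + (η * L * y) • x - u) / (2 * η) +
      (η / 2 * X ^ 2 + c * X) := by
  by_cases hw : 0 < hingeLoss y x w
  · have hyx : ∑ i, |(y • x) i| ≤ X := by
      simp only [Pi.smul_apply, smul_eq_mul, abs_mul, ← mul_sum]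
      exact (mul_le_of_le_one_left (sum_nonneg fun i _ => abs_nonneg _) hy).trans hx
    rw [hL, if_pos hw, mul_one, ← smul_smul]
    exact (hingeLoss_sub_le_of_pos hw u).trans (dotProduct_sub_le_of_step hη hc hθw hyx u)
  · have hX : 0 ≤ X := (sum_nonneg fun i _ => abs_nonneg _).trans hx
    have hu := hingeLoss_nonneg y x u
    have hbudget : 0 ≤ η / 2 * X ^ 2 + c * X := by positivity
    rw [hL, if_neg hw, mul_zero, zero_mul, zero_smul, add_zero,
      le_antisymm (not_lt.mp hw) (hingeLoss_nonneg y x w)]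
    linarith

end Vectors

lemma sum_Icc_le_of_le_sub_succ {a Φ : ℕ → ℝ} {C : ℝ} {T : ℕ}
    (h : ∀ t ∈ Icc 1 T, a t ≤ Φ t - Φ (t + 1) + C) (hΦ : 0 ≤ Φ (T + 1)) :
    ∑ t ∈ Icc 1 T, a t ≤ Φ 1 + T * C := by
  have htelescope : ∑ t ∈ Icc 1 T, (Φ t - Φ (t + 1)) = Φ 1 - Φ (T + 1) := by
    rcases T.eq_zero_or_pos with rfl | hT
    · simp
    · rw [← neg_sub (Φ (T + 1)), ← sum_Icc_sub hT, ← sum_neg_distrib]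
      simp only [neg_sub]
  calc ∑ t ∈ Icc 1 T, a t ≤ ∑ t ∈ Icc 1 T, (Φ t - Φ (t + 1) + C) := sum_le_sum h
    _ = Φ 1 - Φ (T + 1) + T * C := by
      rw [sum_add_distrib, htelescope, sum_const, Nat.card_Icc, nsmul_eq_mul,
        Nat.add_sub_cancel]
    _ ≤ Φ 1 + T * C := by linarith

/-- FSOL regret bound:
`∑ ℓ_t(w_t) - ∑ ℓ_t(w) ≤ ‖w‖₂²/(2η) + (η/2) T X² + ηλ T X`. -/
theorem fsol_regret {d : ℕ} (T : ℕ) (X η lam : ℝ) (hη : 0 < η) (hlam : 0 ≤ lam)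
    (x : ℕ → Fin d → ℝ) (y : ℕ → ℝ)
    (hy : ∀ t ∈ Finset.Icc 1 T, y t = 1 ∨ y t = -1)
    (hX : ∀ t ∈ Finset.Icc 1 T, ∑ i, |x t i| ≤ X)
    (θ w : ℕ → Fin d → ℝ) (L : ℕ → ℝ)
    (loss : ℕ → (Fin d → ℝ) → ℝ)
    (hloss : ∀ t v, loss t v = max 0 (1 - y t * dot v (x t)))
    (hθ1 : θ 1 = 0)
    (hw : ∀ t ∈ Finset.Icc 1 T, ∀ i,
      w t i = Real.sign (θ t i) * max (|θ t i| - η * lam) 0)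
    (hL : ∀ t, L t = if 0 < loss t (w t) then 1 else 0)
    (hθ : ∀ t ∈ Finset.Icc 1 T, θ (t + 1) = θ t + (η * L t * y t) • x t)
    (wv : Fin d → ℝ) :
    ∑ t ∈ Finset.Icc 1 T, loss t (w t) - ∑ t ∈ Finset.Icc 1 T, loss t wv ≤
      (∑ i, (wv i) ^ 2) / (2 * η) + η / 2 * T * X ^ 2 + η * lam * T * X := by
  set Φ : ℕ → ℝ := fun t => (θ t - wv) ⬝ᵥ (θ t - wv) / (2 * η) with hΦ
  have hround : ∀ t ∈ Icc 1 T,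
      loss t (w t) - loss t wv ≤ Φ t - Φ (t + 1) + (η / 2 * X ^ 2 + η * lam * X) := by
    intro t ht
    have hyt : |y t| ≤ 1 := by rcases hy t ht with h | h <;> simp [h]
    have hθw : ∀ i, |θ t i - w t i| ≤ η * lam := fun i => by
      rw [hw t ht i]; exact abs_sub_softThreshold_le (by positivity) _
    have hhinge : loss t = hingeLoss (y t) (x t) := funext (hloss t)
    simp only [hΦ]
    rw [hθ t ht, hhinge]
    exact hingeLoss_sub_le_of_fsol_step hη (by positivity) hyt hθw (hX t ht) (hhinge ▸ hL t) wv
  have hΦnonneg : 0 ≤ Φ (T + 1) :=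
    div_nonneg (sum_nonneg fun i _ => mul_self_nonneg _) (by positivity)
  rw [← sum_sub_distrib]
  calc _ ≤ Φ 1 + T * (η / 2 * X ^ 2 + η * lam * X) := sum_Icc_le_of_le_sub_succ hround hΦnonneg
    _ = _ := by
      simp only [hΦ, hθ1, zero_sub, dotProduct, Pi.neg_apply, neg_mul_neg, sq]
      ring
end

section
/- (CS-SSOL regret bound) In the SSOL setting (A_0 = I, A_t = A_{t-1} + x_t x_t^⊤/r, Φ_t(w) = (1/2)w^⊤A_t w, λ_t = λ/t, ‖x_t‖₁ ≤ X hence ‖x_t‖₂ ≤ X) with class weights c_{y_t} ∈ {c_+, c_-} > 0 and updates θ_{t+1} = θ_t + η c_{y_t} L_t y_t x_t, the weighted regret R_T = ∑_t c_{y_t}ℓ_t(w_t) − ∑_t c_{y_t}ℓ_t(w) satisfies R_T ≤ D²/(2η) + c_max²·(η/2)·r·d·log(1 + TX²/r) + c_max·λ·X·(log T + 1) for any w with w^⊤ A_T w ≤ D², where c_max = max(c_+, c_-). -/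
open Finset Matrix

variable {d : ℕ}

lemma star_vec (v : Fin d → ℝ) : star v = v := by funext i; simp

lemma psd_quad {M : Matrix (Fin d) (Fin d) ℝ} (h : M.PosSemidef) (v : Fin d → ℝ) :
    0 ≤ v ⬝ᵥ M *ᵥ v := by simpa [star_vec] using h.dotProduct_mulVec_nonneg v

lemma herm_transpose {M : Matrix (Fin d) (Fin d) ℝ} (h : M.IsHermitian) : Mᵀ = M := by
  exact (by simpa using h : M.IsSymm)

lemma sym_dot {M : Matrix (Fin d) (Fin d) ℝ} (h : M.IsHermitian) (u v : Fin d → ℝ) :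
    u ⬝ᵥ M *ᵥ v = v ⬝ᵥ M *ᵥ u := by
  rw [Matrix.dotProduct_mulVec, ← Matrix.mulVec_transpose, herm_transpose h, dotProduct_comm]

lemma vmv_mulVec (u v w : Fin d → ℝ) : vecMulVec u v *ᵥ w = (v ⬝ᵥ w) • u := by
  ext i
  simp only [Matrix.mulVec, vecMulVec_apply, dotProduct, Pi.smul_apply, smul_eq_mul,
    Finset.mul_sum]
  rw [Finset.sum_mul]
  exact Finset.sum_congr rfl fun k _ => by ring

lemma mul_vmv (M : Matrix (Fin d) (Fin d) ℝ) (u v : Fin d → ℝ) :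
    M * vecMulVec u v = vecMulVec (M *ᵥ u) v := by
  ext i j
  simp [Matrix.mul_apply, vecMulVec_apply, Matrix.mulVec, dotProduct, Finset.sum_mul, mul_assoc]

lemma vmv_mul (M : Matrix (Fin d) (Fin d) ℝ) (u v : Fin d → ℝ) :
    vecMulVec u v * M = vecMulVec u (Mᵀ *ᵥ v) := by
  ext i j
  simp [Matrix.mul_apply, vecMulVec_apply, Matrix.mulVec, dotProduct, Finset.mul_sum, mul_comm,
    mul_assoc, Matrix.transpose_apply]
  ring_nf
  congr 1; funext k; ring

lemma vmv_smul_left (a : ℝ) (u v : Fin d → ℝ) :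
    vecMulVec (a • u) v = a • vecMulVec u v := by
  ext i j; simp [vecMulVec_apply]; ring

lemma vmv_psd (v : Fin d → ℝ) : (vecMulVec v v).PosSemidef := by
  refine PosSemidef.of_dotProduct_mulVec_nonneg ?_ ?_
  · ext i j; simp [conjTranspose_apply, vecMulVec_apply, mul_comm]
  · intro z
    rw [vmv_mulVec, star_vec]
    simp only [dotProduct_smul]
    rw [dotProduct_comm]
    have : (0:ℝ) ≤ (z ⬝ᵥ v) * (z ⬝ᵥ v) := mul_self_nonneg _
    simpa [smul_eq_mul] using this

lemma smul_psd {a : ℝ} (ha : 0 ≤ a) {M : Matrix (Fin d) (Fin d) ℝ} (h : M.PosSemidef) :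
    (a • M).PosSemidef := by
  refine PosSemidef.of_dotProduct_mulVec_nonneg ?_ ?_
  · unfold Matrix.IsHermitian
    rw [conjTranspose_smul]
    simp only [star_trivial]
    rw [show Mᴴ = M from h.1]
  · intro z
    rw [smul_mulVec, dotProduct_smul]
    exact mul_nonneg ha (h.dotProduct_mulVec_nonneg z)

section SM
variable {A : Matrix (Fin d) (Fin d) ℝ} {r : ℝ} {x : Fin d → ℝ}

lemma sherman (hA : A.PosDef) (hr : 0 < r) :
    (A + r⁻¹ • vecMulVec x x)⁻¹
      = A⁻¹ - (r + x ⬝ᵥ A⁻¹ *ᵥ x)⁻¹ • vecMulVec (A⁻¹ *ᵥ x) (A⁻¹ *ᵥ x) := by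
  set p := A⁻¹ *ᵥ x with hp
  set a := x ⬝ᵥ A⁻¹ *ᵥ x with ha
  have ha0 : 0 ≤ a := psd_quad hA.inv.posSemidef x
  have hra : 0 < r + a := by linarith
  have hdet : IsUnit A.det := hA.det_pos.ne'.isUnit
  have hAp : A *ᵥ p = x := by
    rw [hp, Matrix.mulVec_mulVec, Matrix.mul_nonsing_inv _ hdet, Matrix.one_mulVec]
  have hMAinv : vecMulVec x x * A⁻¹ = vecMulVec x p := by
    rw [vmv_mul, herm_transpose hA.inv.isHermitian, hp]
  have hxp : x ⬝ᵥ p = a := rfl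
  apply Matrix.inv_eq_right_inv
  rw [Matrix.add_mul, Matrix.mul_sub, Matrix.mul_sub, Matrix.mul_nonsing_inv _ hdet,
    Matrix.mul_smul, mul_vmv, hAp, Matrix.smul_mul, Matrix.smul_mul, hMAinv,
    Matrix.mul_smul, mul_vmv, vmv_mulVec, hxp, vmv_smul_left]
  have : (1 : Matrix (Fin d) (Fin d) ℝ) - (r + a)⁻¹ • vecMulVec x p
        + (r⁻¹ • vecMulVec x p - r⁻¹ • (r + a)⁻¹ • a • vecMulVec x p)
      = 1 + (-(r + a)⁻¹ + r⁻¹ - r⁻¹ * ((r + a)⁻¹ * a)) • vecMulVec x p := by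
    module
  rw [this]
  have hcoef : -(r + a)⁻¹ + r⁻¹ - r⁻¹ * ((r + a)⁻¹ * a) = 0 := by
    field_simp
    ring
  rw [hcoef, zero_smul, add_zero]
end SM

section SM2
variable {A : Matrix (Fin d) (Fin d) ℝ} {r : ℝ} {x : Fin d → ℝ}

lemma step_posDef (hA : A.PosDef) (hr : 0 < r) : (A + r⁻¹ • vecMulVec x x).PosDef :=
  hA.add_posSemidef (smul_psd (inv_nonneg.mpr hr.le) (vmv_psd x))

lemma step_quad_mono (hA : A.PosDef) (hr : 0 < r) (y : Fin d → ℝ) :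
    y ⬝ᵥ (A + r⁻¹ • vecMulVec x x)⁻¹ *ᵥ y ≤ y ⬝ᵥ A⁻¹ *ᵥ y := by
  set p := A⁻¹ *ᵥ x with hp
  set a := x ⬝ᵥ A⁻¹ *ᵥ x with ha
  have ha0 : 0 ≤ a := psd_quad hA.inv.posSemidef x
  have hra : 0 < r + a := by linarith
  rw [sherman hA hr, Matrix.sub_mulVec, dotProduct_sub, smul_mulVec, vmv_mulVec,
    dotProduct_smul, dotProduct_smul]
  have : (0:ℝ) ≤ (r + a)⁻¹ * ((p ⬝ᵥ y) * (y ⬝ᵥ p)) := by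
    exact mul_nonneg (inv_nonneg.mpr hra.le) (by rw [dotProduct_comm p y]; exact mul_self_nonneg _)
  simp only [smul_eq_mul, ← ha, ← hp]
  nlinarith [this]

lemma step_xBx (hA : A.PosDef) (hr : 0 < r) :
    x ⬝ᵥ (A + r⁻¹ • vecMulVec x x)⁻¹ *ᵥ x
      = r * (x ⬝ᵥ A⁻¹ *ᵥ x) / (r + x ⬝ᵥ A⁻¹ *ᵥ x) := by
  set p := A⁻¹ *ᵥ x with hp
  set a := x ⬝ᵥ A⁻¹ *ᵥ x with ha
  have ha0 : 0 ≤ a := psd_quad hA.inv.posSemidef x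
  have hra : 0 < r + a := by linarith
  rw [sherman hA hr, Matrix.sub_mulVec, dotProduct_sub, smul_mulVec, vmv_mulVec,
    dotProduct_smul, dotProduct_smul]
  have hxp : x ⬝ᵥ p = a := rfl
  have hpx : p ⬝ᵥ x = a := by rw [dotProduct_comm]
  simp only [smul_eq_mul, hxp, hpx, ← ha]
  field_simp
  rw [show (A⁻¹ *ᵥ x) ⬝ᵥ x = a from hpx]
  ring

lemma step_det (hA : A.PosDef) (hr : 0 < r) :
    (A + r⁻¹ • vecMulVec x x).det = A.det * (1 + r⁻¹ * (x ⬝ᵥ A⁻¹ *ᵥ x)) := by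
  set p := A⁻¹ *ᵥ x with hp
  have hdet : IsUnit A.det := hA.det_pos.ne'.isUnit
  have hB : A + r⁻¹ • vecMulVec x x = A * (1 + r⁻¹ • vecMulVec p x) := by
    rw [Matrix.mul_add, Matrix.mul_one, Matrix.mul_smul, mul_vmv, hp, Matrix.mulVec_mulVec,
      Matrix.mul_nonsing_inv _ hdet, Matrix.one_mulVec]
  rw [hB, det_mul]
  congr 1
  have : (r⁻¹ • vecMulVec p x : Matrix (Fin d) (Fin d) ℝ) = replicateCol Unit (r⁻¹ • p) * replicateRow Unit x := by
    rw [← vecMulVec_eq, vmv_smul_left]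
  rw [this, Matrix.det_one_add_replicateCol_mul_replicateRow, dotProduct_smul]
  simp only [smul_eq_mul, hp]

lemma ratio_le_log {a r : ℝ} (ha : 0 ≤ a) (hr : 0 < r) :
    r * a / (r + a) ≤ r * Real.log (1 + r⁻¹ * a) := by
  have ht : 0 ≤ r⁻¹ * a := by positivity
  have h1t : 0 < 1 + r⁻¹ * a := by linarith
  have h := Real.log_le_sub_one_of_pos (x := (1 + r⁻¹ * a)⁻¹) (by positivity)
  rw [Real.log_inv] at h
  -- h : -log(1+t) ≤ (1+t)⁻¹ - 1
  have hlog : (r⁻¹ * a) / (1 + r⁻¹ * a) ≤ Real.log (1 + r⁻¹ * a) := by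
    have : 1 - (1 + r⁻¹ * a)⁻¹ = (r⁻¹ * a) / (1 + r⁻¹ * a) := by field_simp; ring
    linarith [this ▸ (by linarith : 1 - (1 + r⁻¹ * a)⁻¹ ≤ Real.log (1 + r⁻¹ * a))]
  have key : r * a / (r + a) = r * ((r⁻¹ * a) / (1 + r⁻¹ * a)) := by
    field_simp
  rw [key]
  exact mul_le_mul_of_nonneg_left hlog hr.le
end SM2

section Trace

lemma trace_eq_sum_eigenvalues {M : Matrix (Fin d) (Fin d) ℝ} (hM : M.IsHermitian) :
    M.trace = ∑ i, hM.eigenvalues i := by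
  nth_rewrite 1 [hM.spectral_theorem]
  rw [Unitary.conjStarAlgAut_apply, Matrix.trace_mul_cycle]
  rw [show (star hM.eigenvectorUnitary : Matrix (Fin d) (Fin d) ℝ)
        * (hM.eigenvectorUnitary : Matrix (Fin d) (Fin d) ℝ) = 1 from
      Unitary.coe_star_mul_self _]
  rw [Matrix.one_mul, Matrix.trace_diagonal]
  simp

lemma det_eq_prod_eigs {M : Matrix (Fin d) (Fin d) ℝ} (hM : M.IsHermitian) :
    M.det = ∏ i, hM.eigenvalues i := by
  have := hM.det_eq_prod_eigenvalues
  simpa using this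

lemma det_le_pow_trace {M : Matrix (Fin d) (Fin d) ℝ} (hM : M.PosSemidef) (hd : 0 < d) :
    M.det ≤ (M.trace / d) ^ d := by
  have hev : ∀ i, 0 ≤ hM.1.eigenvalues i := hM.eigenvalues_nonneg
  have hdR : (0:ℝ) < d := by exact_mod_cast hd
  have hamgm :
      (∏ i, (hM.1.eigenvalues i) ^ ((d:ℝ)⁻¹)) ≤ ∑ i, (d:ℝ)⁻¹ * hM.1.eigenvalues i := by
    have := Real.geom_mean_le_arith_mean_weighted Finset.univ (fun _ => (d:ℝ)⁻¹)
      (fun i => hM.1.eigenvalues i) (fun i _ => by positivity)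
      (by simp [Finset.card_univ]; field_simp) (fun i _ => hev i)
    simpa using this
  have hsum : ∑ i, (d:ℝ)⁻¹ * hM.1.eigenvalues i = M.trace / d := by
    rw [← Finset.mul_sum, trace_eq_sum_eigenvalues hM.1]
    ring
  have hprod : M.det = (∏ i, (hM.1.eigenvalues i) ^ ((d:ℝ)⁻¹)) ^ d := by
    rw [← Finset.prod_pow, det_eq_prod_eigs hM.1]
    refine Finset.prod_congr rfl fun i _ => ?_
    rw [← Real.rpow_natCast ((hM.1.eigenvalues i) ^ ((d:ℝ)⁻¹)) d, ← Real.rpow_mul (hev i),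
      inv_mul_cancel₀ hdR.ne', Real.rpow_one]
  rw [hprod, ← hsum]
  exact pow_le_pow_left₀ (Finset.prod_nonneg fun i _ => Real.rpow_nonneg (hev i) _) hamgm d

end Trace

section Misc

lemma quad_expand {M : Matrix (Fin d) (Fin d) ℝ} (hM : M.IsHermitian) (a b : Fin d → ℝ) :
    (a + b) ⬝ᵥ M *ᵥ (a + b) = a ⬝ᵥ M *ᵥ a + 2 * (b ⬝ᵥ M *ᵥ a) + b ⬝ᵥ M *ᵥ b := by
  rw [Matrix.mulVec_add, dotProduct_add, add_dotProduct, add_dotProduct, sym_dot hM a b]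
  ring

lemma fenchel {M : Matrix (Fin d) (Fin d) ℝ} (hM : M.PosDef) (p v : Fin d → ℝ) :
    p ⬝ᵥ v ≤ (1/2) * (p ⬝ᵥ M⁻¹ *ᵥ p) + (1/2) * (v ⬝ᵥ M *ᵥ v) := by
  have hdet : IsUnit M.det := hM.det_pos.ne'.isUnit
  have hq := psd_quad hM.posSemidef (M⁻¹ *ᵥ p - v)
  have hMp : M *ᵥ (M⁻¹ *ᵥ p) = p := by
    rw [Matrix.mulVec_mulVec, Matrix.mul_nonsing_inv _ hdet, Matrix.one_mulVec]
  rw [Matrix.mulVec_sub, hMp, dotProduct_sub, sub_dotProduct, sub_dotProduct] at hq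
  have h1 : (M⁻¹ *ᵥ p) ⬝ᵥ p = p ⬝ᵥ M⁻¹ *ᵥ p := dotProduct_comm _ _
  have h2 : (M⁻¹ *ᵥ p) ⬝ᵥ (M *ᵥ v) = v ⬝ᵥ p := by
    rw [sym_dot hM.isHermitian, hMp]
  have h3 : v ⬝ᵥ p = p ⬝ᵥ v := dotProduct_comm _ _
  linarith [hq, h1 ▸ hq]

lemma soft_thresh_close (a lam : ℝ) (hlam : 0 ≤ lam) :
    |Real.sign a * max (|a| - lam) 0 - a| ≤ lam := by
  rcases lt_trichotomy a 0 with h|h|h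
  · rw [Real.sign_of_neg h, abs_of_neg h]
    rcases le_total (-a - lam) 0 with h2|h2
    · rw [max_eq_right h2, abs_le]; constructor <;> nlinarith
    · rw [max_eq_left h2, abs_le]; constructor <;> nlinarith
  · simp [h, hlam]
  · rw [Real.sign_of_pos h, abs_of_pos h]
    rcases le_total (a - lam) 0 with h2|h2
    · rw [max_eq_right h2, abs_le]; constructor <;> nlinarith
    · rw [max_eq_left h2, abs_le]; constructor <;> nlinarith

lemma sum_inv_le_log (T : ℕ) (hT : 1 ≤ T) :
    ∑ t ∈ Finset.Icc 1 T, ((t:ℝ))⁻¹ ≤ Real.log T + 1 := by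
  induction T with
  | zero => omega
  | succ n ih =>
    rcases Nat.eq_or_lt_of_le hT with h1 | h1
    · simp [← h1]
    · have hn : 1 ≤ n := by omega
      have hsum := ih hn
      rw [Finset.sum_Icc_succ_top (by omega : 1 ≤ n + 1)]
      have hstep : ((n:ℝ) + 1)⁻¹ ≤ Real.log (n + 1) - Real.log n := by
        have hn0 : (0:ℝ) < n := by exact_mod_cast hn
        have h := Real.log_le_sub_one_of_pos (x := (n:ℝ) / (n + 1)) (by positivity)
        rw [Real.log_div hn0.ne' (by positivity)] at h
        have : (n:ℝ) / (n + 1) - 1 = -((n:ℝ)+1)⁻¹ := by field_simp; ring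
        linarith [this ▸ h]
      have : Real.log n + 1 + ((n:ℝ)+1)⁻¹ ≤ Real.log (n+1) + 1 := by linarith
      push_cast
      push_cast at hsum
      linarith
end Misc

lemma sum_dp {s : Finset ℕ} (f : ℕ → Fin d → ℝ) (v : Fin d → ℝ) :
    (∑ t ∈ s, f t) ⬝ᵥ v = ∑ t ∈ s, f t ⬝ᵥ v := by
  simp only [dotProduct, Finset.sum_apply, Finset.sum_mul]
  exact Finset.sum_comm

set_option maxHeartbeats 2000000 in
/-- CS-SSOL regret bound:
weighted regret ≤ `D²/(2η) + c_max² (η/2) r d log(1 + TX²/r) + c_max λ X (log T + 1)`. -/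
theorem cs_ssol_regret {d : ℕ} (T : ℕ) (hT : 1 ≤ T) (X η lam r D cp cm : ℝ)
    (hη : 0 < η) (hlam : 0 ≤ lam) (hr : 0 < r) (hcp : 0 < cp) (hcm : 0 < cm)
    (x : ℕ → Fin d → ℝ) (y : ℕ → ℝ)
    (hy : ∀ t ∈ Finset.Icc 1 T, y t = 1 ∨ y t = -1)
    (c : ℕ → ℝ) (hc : ∀ t, c t = if y t = 1 then cp else cm)
    (hX1 : ∀ t ∈ Finset.Icc 1 T, ∑ i, |x t i| ≤ X)
    (hX2 : ∀ t ∈ Finset.Icc 1 T, Real.sqrt (∑ i, (x t i) ^ 2) ≤ X)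
    (A : ℕ → Matrix (Fin d) (Fin d) ℝ)
    (hA0 : A 0 = 1)
    (hA : ∀ t : ℕ, A (t + 1) = A t + r⁻¹ • Matrix.vecMulVec (x (t + 1)) (x (t + 1)))
    (θ u w : ℕ → Fin d → ℝ) (L : ℕ → ℝ)
    (loss : ℕ → (Fin d → ℝ) → ℝ)
    (hloss : ∀ t v, loss t v = max 0 (1 - y t * dot v (x t)))
    (hθ1 : θ 1 = 0)
    (hu : ∀ t ∈ Finset.Icc 1 T, u t = (A t)⁻¹.mulVec (θ t))
    (hw : ∀ t ∈ Finset.Icc 1 T, ∀ i,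
      w t i = Real.sign (u t i) * max (|u t i| - lam / t) 0)
    (hL : ∀ t, L t = if 0 < loss t (w t) then 1 else 0)
    (hθ : ∀ t ∈ Finset.Icc 1 T, θ (t + 1) = θ t + (η * c t * L t * y t) • x t)
    (wv : Fin d → ℝ) (hwv : wv ⬝ᵥ (A T).mulVec wv ≤ D ^ 2) :
    ∑ t ∈ Finset.Icc 1 T, c t * loss t (w t)
        - ∑ t ∈ Finset.Icc 1 T, c t * loss t wv ≤
      D ^ 2 / (2 * η)
        + (max cp cm) ^ 2 * (η / 2) * r * d * Real.log (1 + T * X ^ 2 / r)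
        + (max cp cm) * lam * X * (Real.log T + 1) := by
  set cmax : ℝ := max cp cm with hcmax
  have hcmax0 : 0 < cmax := lt_of_lt_of_le hcp (le_max_left _ _)
  have hcpos : ∀ t, 0 < c t := by
    intro t; rw [hc t]; split <;> [exact hcp; exact hcm]
  have hcle : ∀ t, c t ≤ cmax := by
    intro t; rw [hc t]; split <;> [exact le_max_left _ _; exact le_max_right _ _]
  have hL01 : ∀ t, L t = 0 ∨ L t = 1 := by
    intro t; rw [hL t]; split <;> [right; left] <;> rfl
  have h1T : 1 ∈ Finset.Icc 1 T := Finset.mem_Icc.mpr ⟨le_refl 1, hT⟩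
  have hX0 : 0 ≤ X := le_trans (Real.sqrt_nonneg _) (hX2 1 h1T)
  have hApd : ∀ t, (A t).PosDef := by
    intro t
    induction t with
    | zero => rw [hA0]; exact Matrix.PosDef.one
    | succ n ih => rw [hA n]; exact step_posDef ih hr
  set s : ℕ → Fin d → ℝ := fun t => (c t * L t * y t) • x t with hs
  have hθstep : ∀ t ∈ Finset.Icc 1 T, θ (t + 1) = θ t + η • s t := by
    intro t ht
    rw [hθ t ht, hs]
    congr 1
    rw [smul_smul]
    congr 1
    ring
  -- per-step quadratic identity
  have hstep_id : ∀ n ∈ Finset.Icc 1 T,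
      (1/2) * (θ (n+1) ⬝ᵥ (A n)⁻¹ *ᵥ θ (n+1))
        = (1/2) * (θ n ⬝ᵥ (A n)⁻¹ *ᵥ θ n) + η * (s n ⬝ᵥ u n)
          + (η^2/2) * (s n ⬝ᵥ (A n)⁻¹ *ᵥ s n) := by
    intro n hn
    rw [hθstep n hn, quad_expand (hApd n).inv.isHermitian, hu n hn]
    simp only [smul_dotProduct, Matrix.mulVec_smul, dotProduct_smul, smul_eq_mul]
    ring
  -- FTRL telescoping claim
  have claim1 : ∀ n, 1 ≤ n → n ≤ T →
      (1/2) * (θ (n+1) ⬝ᵥ (A n)⁻¹ *ᵥ θ (n+1))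
        ≤ ∑ t ∈ Finset.Icc 1 n,
            (η * (s t ⬝ᵥ u t) + (η^2/2) * (s t ⬝ᵥ (A t)⁻¹ *ᵥ s t)) := by
    intro n hn
    induction n, hn using Nat.le_induction with
    | base =>
      intro h1
      rw [hstep_id 1 h1T]
      simp [hθ1]
    | succ n hn ih =>
      intro hn1
      have hnT : n ≤ T := le_trans (Nat.le_succ n) hn1
      have hmem : n + 1 ∈ Finset.Icc 1 T := Finset.mem_Icc.mpr ⟨by omega, hn1⟩
      rw [Finset.sum_Icc_succ_top (by omega : 1 ≤ n + 1), hstep_id (n+1) hmem]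
      have hmono : θ (n+1) ⬝ᵥ (A (n+1))⁻¹ *ᵥ θ (n+1) ≤ θ (n+1) ⬝ᵥ (A n)⁻¹ *ᵥ θ (n+1) := by
        rw [hA n]
        exact step_quad_mono (hApd n) hr _
      have := ih hnT
      linarith
  -- θ (T+1) as a sum
  have claim2 : ∀ n, n ≤ T → θ (n+1) = ∑ t ∈ Finset.Icc 1 n, η • s t := by
    intro n
    induction n with
    | zero => intro _; simpa using hθ1
    | succ m ih =>
      intro hm
      have hmem : m + 1 ∈ Finset.Icc 1 T := Finset.mem_Icc.mpr ⟨by omega, hm⟩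
      rw [Finset.sum_Icc_succ_top (by omega : 1 ≤ m + 1), ← ih (by omega),
        hθstep (m+1) hmem]
  -- Fenchel step
  have hb0 : ∀ t, 0 ≤ x t ⬝ᵥ (A t)⁻¹ *ᵥ x t := fun t => psd_quad (hApd t).inv.posSemidef _
  have hQ : ∀ t, s t ⬝ᵥ (A t)⁻¹ *ᵥ s t = (c t * L t * y t)^2 * (x t ⬝ᵥ (A t)⁻¹ *ᵥ x t) := by
    intro t
    rw [hs]
    simp only [smul_dotProduct, Matrix.mulVec_smul, dotProduct_smul, smul_eq_mul]
    ring
  have hQle : ∀ t ∈ Finset.Icc 1 T,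
      s t ⬝ᵥ (A t)⁻¹ *ᵥ s t ≤ cmax^2 * (x t ⬝ᵥ (A t)⁻¹ *ᵥ x t) := by
    intro t ht
    rw [hQ t]
    have habs : (c t * L t * y t)^2 ≤ cmax^2 := by
      have hy2 : (y t)^2 = 1 := by rcases hy t ht with h | h <;> rw [h] <;> norm_num
      have hL2 : (L t)^2 ≤ 1 := by rcases hL01 t with h | h <;> rw [h] <;> norm_num
      have hc2 : (c t)^2 ≤ cmax^2 := by
        have := hcpos t
        nlinarith [hcle t]
      have h1 : (0:ℝ) ≤ (c t)^2 := sq_nonneg _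
      calc (c t * L t * y t)^2 = (c t)^2 * (L t)^2 * (y t)^2 := by ring
        _ = (c t)^2 * (L t)^2 := by rw [hy2, mul_one]
        _ ≤ (c t)^2 * 1 := mul_le_mul_of_nonneg_left hL2 h1
        _ ≤ cmax^2 := by linarith
    exact mul_le_mul_of_nonneg_right habs (hb0 t)
  -- summed FTRL bound
  have hftrl : ∑ t ∈ Finset.Icc 1 T, (s t ⬝ᵥ wv - s t ⬝ᵥ u t)
      ≤ D^2/(2*η) + (η/2) * ∑ t ∈ Finset.Icc 1 T, (s t ⬝ᵥ (A t)⁻¹ *ᵥ s t) := by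
    have hfen := fenchel (hApd T) (θ (T+1)) wv
    have hcl := claim1 T hT (le_refl T)
    have hdot : θ (T+1) ⬝ᵥ wv = ∑ t ∈ Finset.Icc 1 T, η * (s t ⬝ᵥ wv) := by
      rw [claim2 T (le_refl T), sum_dp]
      exact Finset.sum_congr rfl fun t _ => smul_dotProduct _ _ _
    have hmv : wv ⬝ᵥ (A T) *ᵥ wv ≤ D^2 := hwv
    rw [hdot] at hfen
    rw [Finset.sum_add_distrib] at hcl
    rw [Finset.sum_sub_distrib]
    have key : η * ∑ t ∈ Finset.Icc 1 T, (s t ⬝ᵥ wv)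
        ≤ η * ∑ t ∈ Finset.Icc 1 T, (s t ⬝ᵥ u t)
          + (η^2/2) * ∑ t ∈ Finset.Icc 1 T, (s t ⬝ᵥ (A t)⁻¹ *ᵥ s t) + D^2/2 := by
      rw [Finset.mul_sum, Finset.mul_sum, Finset.mul_sum]
      have e1 : ∑ t ∈ Finset.Icc 1 T, η * (s t ⬝ᵥ u t)
          + ∑ t ∈ Finset.Icc 1 T, η ^ 2 / 2 * (s t ⬝ᵥ (A t)⁻¹ *ᵥ s t)
          ≥ (1/2) * (θ (T+1) ⬝ᵥ (A T)⁻¹ *ᵥ θ (T+1)) := hcl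
      have e2 : ∑ t ∈ Finset.Icc 1 T, η ^ 2 / 2 * (s t ⬝ᵥ (A t)⁻¹ *ᵥ s t)
          = ∑ t ∈ Finset.Icc 1 T, η ^ 2 * (s t ⬝ᵥ (A t)⁻¹ *ᵥ s t) / 2 := by
        exact Finset.sum_congr rfl fun t _ => by ring
      linarith [hfen, hcl]
    have hsplit : ∑ t ∈ Finset.Icc 1 T, (s t ⬝ᵥ wv) - ∑ t ∈ Finset.Icc 1 T, (s t ⬝ᵥ u t)
        ≤ (D^2/2 + (η^2/2) * ∑ t ∈ Finset.Icc 1 T, (s t ⬝ᵥ (A t)⁻¹ *ᵥ s t)) / η := by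
      rw [le_div_iff₀ hη]
      nlinarith [key]
    calc ∑ t ∈ Finset.Icc 1 T, (s t ⬝ᵥ wv) - ∑ t ∈ Finset.Icc 1 T, (s t ⬝ᵥ u t)
        ≤ (D^2/2 + (η^2/2) * ∑ t ∈ Finset.Icc 1 T, (s t ⬝ᵥ (A t)⁻¹ *ᵥ s t)) / η := hsplit
      _ = D^2/(2*η) + (η/2) * ∑ t ∈ Finset.Icc 1 T, (s t ⬝ᵥ (A t)⁻¹ *ᵥ s t) := by
          field_simp
  -- log-det telescoping
  have claim3 : ∀ n, ∑ t ∈ Finset.Icc 1 n, (x t ⬝ᵥ (A t)⁻¹ *ᵥ x t)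
      ≤ r * Real.log (A n).det := by
    intro n
    induction n with
    | zero => simp [hA0]
    | succ m ih =>
      rw [Finset.sum_Icc_succ_top (by omega : 1 ≤ m+1)]
      set a := x (m+1) ⬝ᵥ (A m)⁻¹ *ᵥ x (m+1) with ha
      have ha0 : 0 ≤ a := psd_quad (hApd m).inv.posSemidef _
      have hra : 0 ≤ r⁻¹ * a := mul_nonneg (inv_nonneg.mpr hr.le) ha0
      have hxbx : x (m+1) ⬝ᵥ (A (m+1))⁻¹ *ᵥ x (m+1) = r * a / (r + a) := by
        rw [hA m]
        exact step_xBx (hApd m) hr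
      have hdet : (A (m+1)).det = (A m).det * (1 + r⁻¹ * a) := by
        rw [hA m]
        exact step_det (hApd m) hr
      have hlog : Real.log (A (m+1)).det = Real.log (A m).det + Real.log (1 + r⁻¹ * a) := by
        rw [hdet, Real.log_mul (hApd m).det_pos.ne' (by linarith)]
      have hratio := ratio_le_log ha0 hr
      rw [hxbx, hlog, mul_add]
      linarith
  -- trace bound
  have htrace : ∀ n, n ≤ T → (A n).trace ≤ d + n * X^2 / r := by
    intro n
    induction n with
    | zero => intro _; simp [hA0, Matrix.trace_one]
    | succ m ih =>
      intro hm
      have hmem : m + 1 ∈ Finset.Icc 1 T := Finset.mem_Icc.mpr ⟨by omega, hm⟩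
      have hS0 : 0 ≤ ∑ i, (x (m+1) i)^2 := Finset.sum_nonneg fun i _ => sq_nonneg _
      have hSX : ∑ i, (x (m+1) i)^2 ≤ X^2 := by
        have h1 := hX2 (m+1) hmem
        have h2 : Real.sqrt (∑ i, (x (m+1) i)^2) ^ 2 ≤ X ^ 2 :=
          pow_le_pow_left₀ (Real.sqrt_nonneg _) h1 2
        rwa [Real.sq_sqrt hS0] at h2
      have htr : (A (m+1)).trace = (A m).trace + r⁻¹ * ∑ i, (x (m+1) i)^2 := by
        rw [hA m, Matrix.trace_add, Matrix.trace_smul]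
        congr 1
        simp [Matrix.trace, Matrix.diag, vecMulVec_apply, pow_two, Finset.mul_sum]
      have hmono : r⁻¹ * ∑ i, (x (m+1) i)^2 ≤ r⁻¹ * X^2 :=
        mul_le_mul_of_nonneg_left hSX (inv_nonneg.mpr hr.le)
      have e : ((m:ℝ)+1) * X^2 / r = (m:ℝ) * X^2 / r + r⁻¹ * X^2 := by
        field_simp
      have him := ih (by omega)
      rw [htr]
      push_cast
      push_cast at him
      linarith
  -- log det bound
  have hlog1 : (0:ℝ) ≤ T * X^2 / r := by positivity
  have hlogdet : Real.log (A T).det ≤ d * Real.log (1 + T * X^2 / r) := by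
    rcases Nat.eq_zero_or_pos d with hd0 | hd
    · subst hd0
      have : (A T).det = 1 := Matrix.det_isEmpty
      simp [this]
    · have hdR : (0:ℝ) < d := by exact_mod_cast hd
      have htr0 : 0 ≤ (A T).trace := by
        rw [trace_eq_sum_eigenvalues (hApd T).isHermitian]
        exact Finset.sum_nonneg fun i _ => (hApd T).posSemidef.eigenvalues_nonneg i
      have hdet_le := det_le_pow_trace (hApd T).posSemidef hd
      have h1 : (A T).trace / d ≤ 1 + T * X^2 / r := by
        rw [div_le_iff₀ hdR]
        have h2 := htrace T (le_refl T)
        have h3 : (1:ℝ) ≤ d := by exact_mod_cast hd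
        have h4 : T * X^2 / r ≤ T * X^2 / r * d := le_mul_of_one_le_right hlog1 h3
        nlinarith
      have h5 : (A T).det ≤ (1 + T * X^2 / r)^d :=
        le_trans hdet_le (pow_le_pow_left₀ (by positivity) h1 d)
      calc Real.log (A T).det ≤ Real.log ((1 + T * X^2 / r)^d) :=
            Real.log_le_log (hApd T).det_pos h5
        _ = d * Real.log (1 + T * X^2 / r) := by rw [Real.log_pow]
  -- per-step loss bound
  have hdot_eq : ∀ v z : Fin d → ℝ, dot v z = v ⬝ᵥ z := fun _ _ => rfl
  have hlossb : ∀ t ∈ Finset.Icc 1 T,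
      c t * loss t (w t) - c t * loss t wv ≤ s t ⬝ᵥ wv - s t ⬝ᵥ w t := by
    intro t ht
    by_cases hpos : 0 < loss t (w t)
    · have hLt : L t = 1 := by rw [hL t, if_pos hpos]
      have hlw : loss t (w t) = 1 - y t * (w t ⬝ᵥ x t) := by
        rw [hloss t (w t), hdot_eq] at hpos ⊢
        rcases le_or_gt (1 - y t * (w t ⬝ᵥ x t)) 0 with h | h
        · rw [max_eq_left h] at hpos
          exact absurd hpos (lt_irrefl 0)
        · exact max_eq_right h.le
      have hlv : 1 - y t * (wv ⬝ᵥ x t) ≤ loss t wv := by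
        rw [hloss t wv, hdot_eq]
        exact le_max_right _ _
      have hsv : s t ⬝ᵥ wv = c t * y t * (wv ⬝ᵥ x t) := by
        rw [hs]
        simp only [smul_dotProduct, smul_eq_mul, hLt]
        rw [dotProduct_comm]
        ring
      have hsw : s t ⬝ᵥ w t = c t * y t * (w t ⬝ᵥ x t) := by
        rw [hs]
        simp only [smul_dotProduct, smul_eq_mul, hLt]
        rw [dotProduct_comm]
        ring
      have hmul := mul_le_mul_of_nonneg_left hlv (hcpos t).le
      rw [hsv, hsw, hlw]
      nlinarith [hmul]
    · have hLt : L t = 0 := by rw [hL t, if_neg hpos]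
      have hs0 : s t = 0 := by
        rw [hs]
        simp [hLt]
      have hlw0 : loss t (w t) ≤ 0 := le_of_not_gt hpos
      have hlv0 : 0 ≤ loss t wv := by rw [hloss t wv]; exact le_max_left _ _
      rw [hs0]
      simp only [zero_dotProduct, sub_zero, sub_self]
      have h1 : c t * loss t (w t) ≤ 0 := mul_nonpos_of_nonneg_of_nonpos (hcpos t).le hlw0
      have h2 : 0 ≤ c t * loss t wv := mul_nonneg (hcpos t).le hlv0
      linarith
  -- soft-threshold term
  have hst : ∀ t ∈ Finset.Icc 1 T,
      s t ⬝ᵥ u t - s t ⬝ᵥ w t ≤ cmax * lam * X * ((t:ℝ))⁻¹ := by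
    intro t ht
    have ht1 : 1 ≤ t := (Finset.mem_Icc.mp ht).1
    have htR : (0:ℝ) < t := by exact_mod_cast ht1
    have hlt0 : 0 ≤ lam / t := div_nonneg hlam htR.le
    have habs1 : ∀ i, |s t i| ≤ cmax * |x t i| := by
      intro i
      have : s t i = (c t * L t * y t) * x t i := rfl
      rw [this, abs_mul]
      have hcy : |c t * L t * y t| ≤ cmax := by
        rw [abs_mul, abs_mul]
        have h1 : |c t| = c t := abs_of_pos (hcpos t)
        have h2 : |L t| ≤ 1 := by rcases hL01 t with h | h <;> rw [h] <;> norm_num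
        have h3 : |y t| = 1 := by rcases hy t ht with h | h <;> rw [h] <;> norm_num
        rw [h1, h3, mul_one]
        calc c t * |L t| ≤ c t * 1 := mul_le_mul_of_nonneg_left h2 (hcpos t).le
          _ ≤ cmax := by rw [mul_one]; exact hcle t
      exact mul_le_mul_of_nonneg_right hcy (abs_nonneg _)
    have habs2 : ∀ i, |u t i - w t i| ≤ lam / t := by
      intro i
      have := soft_thresh_close (u t i) (lam / t) hlt0
      rw [← hw t ht i] at this
      rw [abs_sub_comm]
      exact this
    have hsum : s t ⬝ᵥ u t - s t ⬝ᵥ w t = ∑ i, s t i * (u t i - w t i) := by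
      rw [← dotProduct_sub]
      rfl
    rw [hsum]
    calc ∑ i, s t i * (u t i - w t i) ≤ ∑ i, |s t i * (u t i - w t i)| :=
          Finset.sum_le_sum fun i _ => le_abs_self _
      _ ≤ ∑ i, (cmax * |x t i|) * (lam / t) := by
          refine Finset.sum_le_sum fun i _ => ?_
          rw [abs_mul]
          exact mul_le_mul (habs1 i) (habs2 i) (abs_nonneg _)
            (mul_nonneg hcmax0.le (abs_nonneg _))
      _ = cmax * (lam / t) * ∑ i, |x t i| := by
          rw [Finset.mul_sum]
          exact Finset.sum_congr rfl fun i _ => by ring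
      _ ≤ cmax * (lam / t) * X := by
          refine mul_le_mul_of_nonneg_left (hX1 t ht) ?_
          exact mul_nonneg hcmax0.le hlt0
      _ = cmax * lam * X * ((t:ℝ))⁻¹ := by
          field_simp
  -- assemble
  have hharm := sum_inv_le_log T hT
  have hE : ∑ t ∈ Finset.Icc 1 T, (s t ⬝ᵥ wv - s t ⬝ᵥ w t)
      = ∑ t ∈ Finset.Icc 1 T, (s t ⬝ᵥ wv - s t ⬝ᵥ u t)
        + ∑ t ∈ Finset.Icc 1 T, (s t ⬝ᵥ u t - s t ⬝ᵥ w t) := by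
    rw [← Finset.sum_add_distrib]
    exact Finset.sum_congr rfl fun t _ => by ring
  have hP3 : ∑ t ∈ Finset.Icc 1 T, (s t ⬝ᵥ u t - s t ⬝ᵥ w t)
      ≤ cmax * lam * X * (Real.log T + 1) := by
    calc ∑ t ∈ Finset.Icc 1 T, (s t ⬝ᵥ u t - s t ⬝ᵥ w t)
        ≤ ∑ t ∈ Finset.Icc 1 T, cmax * lam * X * ((t:ℝ))⁻¹ := Finset.sum_le_sum hst
      _ = cmax * lam * X * ∑ t ∈ Finset.Icc 1 T, ((t:ℝ))⁻¹ := by rw [Finset.mul_sum]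
      _ ≤ cmax * lam * X * (Real.log T + 1) := by
          refine mul_le_mul_of_nonneg_left hharm ?_
          exact mul_nonneg (mul_nonneg hcmax0.le hlam) hX0
  have hP2 : (η/2) * ∑ t ∈ Finset.Icc 1 T, (s t ⬝ᵥ (A t)⁻¹ *ᵥ s t)
      ≤ cmax^2 * (η/2) * r * (d:ℝ) * Real.log (1 + T * X^2 / r) := by
    have hQsum : ∑ t ∈ Finset.Icc 1 T, (s t ⬝ᵥ (A t)⁻¹ *ᵥ s t)
        ≤ cmax^2 * ∑ t ∈ Finset.Icc 1 T, (x t ⬝ᵥ (A t)⁻¹ *ᵥ x t) := by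
      rw [Finset.mul_sum]
      exact Finset.sum_le_sum hQle
    have hbsum : cmax^2 * ∑ t ∈ Finset.Icc 1 T, (x t ⬝ᵥ (A t)⁻¹ *ᵥ x t)
        ≤ cmax^2 * (r * ((d:ℝ) * Real.log (1 + T * X^2 / r))) := by
      refine mul_le_mul_of_nonneg_left ?_ (sq_nonneg _)
      calc ∑ t ∈ Finset.Icc 1 T, (x t ⬝ᵥ (A t)⁻¹ *ᵥ x t) ≤ r * Real.log (A T).det :=
            claim3 T
        _ ≤ r * ((d:ℝ) * Real.log (1 + T * X^2 / r)) :=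
            mul_le_mul_of_nonneg_left hlogdet hr.le
    have := le_trans hQsum hbsum
    calc (η/2) * ∑ t ∈ Finset.Icc 1 T, (s t ⬝ᵥ (A t)⁻¹ *ᵥ s t)
        ≤ (η/2) * (cmax^2 * (r * ((d:ℝ) * Real.log (1 + T * X^2 / r)))) :=
          mul_le_mul_of_nonneg_left this (by positivity)
      _ = cmax^2 * (η/2) * r * (d:ℝ) * Real.log (1 + T * X^2 / r) := by ring
  have hLHS : ∑ t ∈ Finset.Icc 1 T, c t * loss t (w t)
      - ∑ t ∈ Finset.Icc 1 T, c t * loss t wv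
      = ∑ t ∈ Finset.Icc 1 T, (c t * loss t (w t) - c t * loss t wv) := by
    rw [Finset.sum_sub_distrib]
  have hmain : ∑ t ∈ Finset.Icc 1 T, (c t * loss t (w t) - c t * loss t wv)
      ≤ ∑ t ∈ Finset.Icc 1 T, (s t ⬝ᵥ wv - s t ⬝ᵥ w t) := Finset.sum_le_sum hlossb
  rw [hLHS]
  calc ∑ t ∈ Finset.Icc 1 T, (c t * loss t (w t) - c t * loss t wv)
      ≤ ∑ t ∈ Finset.Icc 1 T, (s t ⬝ᵥ wv - s t ⬝ᵥ w t) := hmain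
    _ = ∑ t ∈ Finset.Icc 1 T, (s t ⬝ᵥ wv - s t ⬝ᵥ u t)
        + ∑ t ∈ Finset.Icc 1 T, (s t ⬝ᵥ u t - s t ⬝ᵥ w t) := hE
    _ ≤ D^2/(2*η) + (η/2) * ∑ t ∈ Finset.Icc 1 T, (s t ⬝ᵥ (A t)⁻¹ *ᵥ s t)
        + cmax * lam * X * (Real.log T + 1) := add_le_add hftrl hP3
    _ ≤ D^2/(2*η) + cmax^2 * (η/2) * r * (d:ℝ) * Real.log (1 + T * X^2 / r)
        + cmax * lam * X * (Real.log T + 1) := by linarith [hP2]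
end
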